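/- arXiv:0801.1584 — 4 statements merged into one kernel-verified Lean document; each statement's English description precedes it below -/
import Mathlib

section
/- For n = 1 + 6·(a choose 2) + a·b + c with 1 ≤ a, 0 ≤ b ≤ 5, 0 ≤ c < a, the quantity p₀(n) := 6(a-1) + b + 1 - δ_{0,b+c} (where δ is 1 if b + c = 0 and 0 otherwise) equals ⌈√(12n - 3)⌉ - 3. -/
/-!
Completing the square gives `12 n - 3 = (6a + b - 3)² + b(6 - b) + 12c`. The remainder
`b(6 - b) + 12c` is at most `2(6a + b - 3) + 1`, because `c ≤ a - 1` and `b² - 4b + 7 > 0`,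
and since `b ≤ 5` it vanishes exactly when `b = c = 0`. Hence `√(12n - 3)` is the integer
`6a - 3` when `b + c = 0`, and lies in `(6a + b - 3, 6a + b - 2]` otherwise.
-/

theorem Int.ceil_sqrt_sq_add_eq_add_one {m : ℤ} {r : ℝ} (hm : 0 ≤ m) (hr₀ : 0 < r)
    (hr : r ≤ 2 * m + 1) : ⌈√((m : ℝ) ^ 2 + r)⌉ = m + 1 := by
  have hm' : (0 : ℝ) ≤ m := by exact_mod_cast hm
  rw [Int.ceil_eq_iff]
  push_cast
  constructor
  · rw [add_sub_cancel_right, Real.lt_sqrt hm']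
    linarith
  · rw [Real.sqrt_le_iff]
    constructor <;> nlinarith

theorem twelve_mul_sub_three_eq_sq_add {n a b c : ℕ}
    (hn : n = 1 + 6 * Nat.choose a 2 + a * b + c) :
    12 * (n : ℝ) - 3 =
      ((6 * a + b - 3 : ℤ) : ℝ) ^ 2 + ((b * (6 - b) + 12 * c : ℤ) : ℝ) := by
  subst hn
  push_cast [Nat.cast_choose_two]
  ring

/-- For `n = 1 + 6·(a choose 2) + a·b + c` with canonical parameters,
`p₀(n) = 6(a-1) + b + 1 - δ_{0,b+c} = ⌈√(12n-3)⌉ - 3`. -/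
theorem stmt_1 (n a b c : ℕ) (ha : 1 ≤ a) (hb : b ≤ 5) (hc : c < a)
    (hn : n = 1 + 6 * Nat.choose a 2 + a * b + c) :
    (6 * ((a : ℤ) - 1) + b + 1 - (if b + c = 0 then 1 else 0)) =
      ⌈Real.sqrt (12 * (n : ℝ) - 3)⌉ - 3 := by
  rw [twelve_mul_sub_three_eq_sq_add hn]
  split_ifs with hbc
  · obtain ⟨rfl, rfl⟩ : b = 0 ∧ c = 0 := by omega
    have hm : (0 : ℤ) ≤ 6 * a - 3 := by omega
    simp only [Nat.cast_zero, zero_mul, mul_zero, add_zero, Int.cast_zero]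
    rw [Real.sqrt_sq (by exact_mod_cast hm), Int.ceil_intCast]
    ring
  · have hr₀ : (0 : ℤ) < b * (6 - b) + 12 * c := by
      rcases Nat.eq_zero_or_pos b with rfl | hb₀
      · omega
      · nlinarith
    have hr : (b * (6 - b) + 12 * c : ℤ) ≤ 2 * (6 * a + b - 3) + 1 := by
      nlinarith [sq_nonneg ((b : ℤ) - 2)]
    rw [Int.ceil_sqrt_sq_add_eq_add_one (by omega) (by exact_mod_cast hr₀) (by exact_mod_cast hr)]
    ring
end

section
/- If natural numbers p₁, p₂, p₃, p₄ satisfy n = (p₁ + p₂ - 1)(p₃ + p₄ - 1) - (p₁ choose 2) - (p₄ choose 2), then ⌈√(12n - 3)⌉ - 3 ≤ p₁ + 2p₂ + 2p₃ + p₄ - 6, i.e., 12n - 3 ≤ (p₁ + 2p₂ + 2p₃ + p₄ - 3)². -/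
/-!
With `u = p₁ + p₂ - 1` and `v = p₃ + p₄ - 1` one has `p₁ + 2p₂ + 2p₃ + p₄ - 3 = 2(u + v) - (p₁ + p₄) + 1`,
and completing squares turns the claimed inequality into the identity
`(p₁ + 2p₂ + 2p₃ + p₄ - 3)² - (12n - 3) = 3(p₁ + p₂ - p₃ - p₄)² + (p₂ + p₃ - p₁ - p₄)² + 3(p₁ - p₄)²`.
-/

lemma Int.two_mul_mul_pred_ediv_two (p : ℤ) : 2 * (p * (p - 1) / 2) = p * (p - 1) :=
  Int.two_mul_ediv_two_of_even p.even_mul_pred_self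

lemma wegner_sq_sub_eq (p₁ p₂ p₃ p₄ : ℤ) :
    (p₁ + 2 * p₂ + 2 * p₃ + p₄ - 3) ^ 2
        - (12 * ((p₁ + p₂ - 1) * (p₃ + p₄ - 1) - p₁ * (p₁ - 1) / 2 - p₄ * (p₄ - 1) / 2) - 3)
      = 3 * (p₁ + p₂ - p₃ - p₄) ^ 2 + (p₂ + p₃ - p₁ - p₄) ^ 2 + 3 * (p₁ - p₄) ^ 2 := by
  linear_combination 6 * Int.two_mul_mul_pred_ediv_two p₁ + 6 * Int.two_mul_mul_pred_ediv_two p₄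

lemma wegner_le_sq (p₁ p₂ p₃ p₄ : ℤ) :
    12 * ((p₁ + p₂ - 1) * (p₃ + p₄ - 1) - p₁ * (p₁ - 1) / 2 - p₄ * (p₄ - 1) / 2) - 3
      ≤ (p₁ + 2 * p₂ + 2 * p₃ + p₄ - 3) ^ 2 := by
  rw [← sub_nonneg, wegner_sq_sub_eq]
  positivity

lemma Int.ceil_sqrt_le_of_le_sq {m s : ℤ} (hs : 0 ≤ s) (h : m ≤ s ^ 2) : ⌈√(m : ℝ)⌉ ≤ s :=
  Int.ceil_le.2 <| (Real.sqrt_le_left (by exact_mod_cast hs)).2 (by exact_mod_cast h)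

/-- Wegner's lower bound at the arithmetic level: if
`n = (p₁+p₂-1)(p₃+p₄-1) - C(p₁,2) - C(p₄,2)` then
`⌈√(12n-3)⌉ - 3 ≤ p₁+2p₂+2p₃+p₄-6`, i.e. `12n-3 ≤ (p₁+2p₂+2p₃+p₄-3)²`. -/
theorem stmt_2 (p₁ p₂ p₃ p₄ n : ℤ)
    (h₁ : 1 ≤ p₁) (h₂ : 1 ≤ p₂) (h₃ : 1 ≤ p₃) (h₄ : 1 ≤ p₄)
    (hn : n = (p₁ + p₂ - 1) * (p₃ + p₄ - 1)
        - p₁ * (p₁ - 1) / 2 - p₄ * (p₄ - 1) / 2) :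
    ⌈Real.sqrt (12 * (n : ℝ) - 3)⌉ - 3 ≤ p₁ + 2 * p₂ + 2 * p₃ + p₄ - 6 ∧
    12 * n - 3 ≤ (p₁ + 2 * p₂ + 2 * p₃ + p₄ - 3) ^ 2 := by
  have key : 12 * n - 3 ≤ (p₁ + 2 * p₂ + 2 * p₃ + p₄ - 3) ^ 2 := hn ▸ wegner_le_sq p₁ p₂ p₃ p₄
  refine ⟨?_, key⟩
  have hceil := Int.ceil_sqrt_le_of_le_sq (by omega) key
  push_cast at hceil
  omega
end

section
/- Suppose b = 2 and 9^ℓ·(3k - 1) = 12(a - c) - 9 for some k, ℓ ≥ 1. Then 4 divides k, and writing k = 4z, we have a - c = 9^ℓ·z - 6·∑_{i=0}^{ℓ-2} 9^i. -/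
/-!
Since `9 ≡ 1 [ZMOD 4]`, reducing the equation modulo 4 leaves `3k ≡ 0`, so `4 ∣ k`.
Writing `ℓ = n + 1`, `9 ^ (n + 1) = 72 ∑_{i<n} 9^i + 9` by the geometric sum, and substituting this
and `k = 4z` turns the equation into `12 (a - c) = 12 (9 ^ (n + 1) z - 6 ∑_{i<n} 9^i)`.
-/

open Finset

lemma four_dvd_of_nine_pow_mul_eq {k ℓ : ℕ} {d : ℤ}
    (h : (9 : ℤ) ^ ℓ * (3 * k - 1) = 12 * d - 9) : 4 ∣ k := by
  have h4 := congrArg (Int.cast : ℤ → ZMod 4) h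
  push_cast at h4
  rw [show (9 : ZMod 4) = 1 by decide, one_pow, one_mul] at h4
  have hfour : (4 : ZMod 4) = 0 := by decide
  rw [← ZMod.natCast_eq_zero_iff]
  linear_combination 3 * h4 + (-2 * k + 9 * d : ZMod 4) * hfour

lemma nine_pow_succ_eq_geom_sum (n : ℕ) :
    (9 : ℤ) ^ (n + 1) = 72 * ∑ i ∈ range n, (9 : ℤ) ^ i + 9 := by
  have hgeom := geom_sum_mul (9 : ℤ) n
  linear_combination -9 * hgeom

lemma eq_of_nine_pow_mul_eq {z ℓ : ℕ} {d : ℤ} (hℓ : 1 ≤ ℓ)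
    (h : (9 : ℤ) ^ ℓ * (3 * ((4 * z : ℕ) : ℤ) - 1) = 12 * d - 9) :
    d = 9 ^ ℓ * z - 6 * ∑ i ∈ range (ℓ - 1), (9 : ℤ) ^ i := by
  obtain ⟨n, rfl⟩ : ∃ n, ℓ = n + 1 := ⟨ℓ - 1, by omega⟩
  have hpow := nine_pow_succ_eq_geom_sum n
  push_cast at h
  rw [Nat.add_sub_cancel]
  have h12 : 12 * d = 12 * (9 ^ (n + 1) * z - 6 * ∑ i ∈ range n, (9 : ℤ) ^ i) := by
    linear_combination -h - hpow
  exact mul_left_cancel₀ (by norm_num) h12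

theorem stmt_8_general (a c : ℤ) (k ℓ : ℕ) (hℓ : 1 ≤ ℓ)
    (h : (9 : ℤ) ^ ℓ * (3 * k - 1) = 12 * (a - c) - 9) :
    4 ∣ k ∧ ∀ z : ℕ, k = 4 * z →
      a - c = 9 ^ ℓ * z - 6 * ∑ i ∈ Finset.range (ℓ - 1), (9 : ℤ) ^ i := by
  refine ⟨four_dvd_of_nine_pow_mul_eq h, fun z hz => ?_⟩
  subst hz
  exact eq_of_nine_pow_mul_eq hℓ h

/-- Case `b = 2`: from `9^ℓ(3k-1) = 12(a-c) - 9` it follows that `4 ∣ k` and,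
writing `k = 4z`, `a - c = 9^ℓ·z - 6·∑_{i=0}^{ℓ-2} 9^i`. -/
theorem stmt_8 (a b c : ℤ) (hb : b = 2) (hac : 0 < a - c) (k ℓ : ℕ)
    (hk : 1 ≤ k) (hℓ : 1 ≤ ℓ)
    (h : (9 : ℤ) ^ ℓ * (3 * k - 1) = 12 * (a - c) - 9) :
    4 ∣ k ∧ ∀ z : ℕ, k = 4 * z →
      a - c = 9 ^ ℓ * z - 6 * ∑ i ∈ Finset.range (ℓ - 1), (9 : ℤ) ^ i :=
  stmt_8_general a c k ℓ hℓ h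
end

section
/- Let a, b, c be integers with 1 ≤ a, 0 ≤ b ≤ 5, 0 ≤ c < a, not both b = 0 and c = 0. There exist k, ℓ ≥ 1 with 9^ℓ(3k-1) = 12(a-c) + (b-2)² - 9 if and only if either (b = 2 and a - c ≡ -6·∑_{i=0}^{ℓ-2}9^i (mod 9^ℓ) for the ℓ with 9^ℓ(3k-1) = 12(a-c) - 9) or (b = 5 and a - c ≡ 6·9^{ℓ-1} (mod 9^ℓ) for the ℓ with 9^ℓ(3k-1) = 12(a-c)). -/
/-!
The left-hand side is divisible by 3, so 3 ∣ (b - 2)², which for 0 ≤ b ≤ 5 leaves only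
b = 2 and b = 5. In either case the equation, divided by 3, says that 4(r - (a - c)) is a
multiple of 9^ℓ for the stated residue r (for b = 2 via 8 ∑_{i<ℓ-1} 9^i = 9^(ℓ-1) - 1),
and since 4 is a unit modulo 9^ℓ this is the congruence a - c ≡ r.
-/

lemma eq_two_or_eq_five_of_three_dvd_sq {b : ℤ} (hb0 : 0 ≤ b) (hb5 : b ≤ 5)
    (h : 3 ∣ (b - 2) ^ 2) : b = 2 ∨ b = 5 := by
  have := Int.prime_three.dvd_of_dvd_pow h
  omega

lemma Int.modEq_nine_pow_of_dvd_four_mul {x y : ℤ} {ℓ : ℕ} (h : 9 ^ ℓ ∣ 4 * (y - x)) :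
    x ≡ y [ZMOD 9 ^ ℓ] := by
  have hcop : IsCoprime ((9 : ℤ) ^ ℓ) 4 :=
    (Int.isCoprime_iff_gcd_eq_one.mpr (by norm_num)).pow_left
  exact Int.modEq_iff_dvd.mpr (hcop.dvd_of_dvd_mul_left h)

lemma modEq_neg_six_mul_geom_sum_of_eq {d k : ℤ} {ℓ : ℕ} (hℓ : 1 ≤ ℓ)
    (h : 9 ^ ℓ * (3 * k - 1) = 12 * d - 9) :
    d ≡ -6 * ∑ i ∈ Finset.range (ℓ - 1), (9 : ℤ) ^ i [ZMOD 9 ^ ℓ] := by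
  obtain ⟨m, rfl⟩ : ∃ m, ℓ = m + 1 := ⟨ℓ - 1, by omega⟩
  have hgeom := geom_sum_mul (9 : ℤ) m
  simp only [Nat.add_sub_cancel]
  refine Int.modEq_nine_pow_of_dvd_four_mul ⟨-k, mul_left_cancel₀ three_ne_zero ?_⟩
  linear_combination h - 9 * hgeom

lemma modEq_six_mul_nine_pow_of_eq {d k : ℤ} {ℓ : ℕ} (hℓ : 1 ≤ ℓ)
    (h : 9 ^ ℓ * (3 * k - 1) = 12 * d) :
    d ≡ 6 * 9 ^ (ℓ - 1) [ZMOD 9 ^ ℓ] := by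
  obtain ⟨m, rfl⟩ : ∃ m, ℓ = m + 1 := ⟨ℓ - 1, by omega⟩
  simp only [Nat.add_sub_cancel]
  refine Int.modEq_nine_pow_of_dvd_four_mul ⟨3 - k, mul_left_cancel₀ three_ne_zero ?_⟩
  linear_combination h

theorem stmt_13_general (a b c : ℤ) (hb0 : 0 ≤ b) (hb5 : b ≤ 5) :
    (∃ k ℓ : ℕ, 1 ≤ k ∧ 1 ≤ ℓ ∧
        (9 : ℤ) ^ ℓ * (3 * k - 1) = 12 * (a - c) + (b - 2) ^ 2 - 9) ↔
    ((b = 2 ∧ ∃ k ℓ : ℕ, 1 ≤ k ∧ 1 ≤ ℓ ∧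
        (9 : ℤ) ^ ℓ * (3 * k - 1) = 12 * (a - c) - 9 ∧
        a - c ≡ -6 * ∑ i ∈ Finset.range (ℓ - 1), (9 : ℤ) ^ i [ZMOD 9 ^ ℓ]) ∨
     (b = 5 ∧ ∃ k ℓ : ℕ, 1 ≤ k ∧ 1 ≤ ℓ ∧
        (9 : ℤ) ^ ℓ * (3 * k - 1) = 12 * (a - c) ∧
        a - c ≡ 6 * 9 ^ (ℓ - 1) [ZMOD 9 ^ ℓ])) := by
  constructor
  · rintro ⟨k, ℓ, hk, hℓ, heq⟩
    obtain ⟨t, ht⟩ : (3 : ℤ) ∣ 9 ^ ℓ := dvd_pow (by norm_num) (by omega)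
    have h3 : (3 : ℤ) ∣ (b - 2) ^ 2 :=
      ⟨t * (3 * k - 1) - 4 * (a - c) + 3, by linear_combination (3 * k - 1) * ht - heq⟩
    rcases eq_two_or_eq_five_of_three_dvd_sq hb0 hb5 h3 with rfl | rfl
    · have heq' : (9 : ℤ) ^ ℓ * (3 * k - 1) = 12 * (a - c) - 9 := by linear_combination heq
      exact Or.inl ⟨rfl, k, ℓ, hk, hℓ, heq', modEq_neg_six_mul_geom_sum_of_eq hℓ heq'⟩
    · have heq' : (9 : ℤ) ^ ℓ * (3 * k - 1) = 12 * (a - c) := by linear_combination heq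
      exact Or.inr ⟨rfl, k, ℓ, hk, hℓ, heq', modEq_six_mul_nine_pow_of_eq hℓ heq'⟩
  · rintro (⟨rfl, k, ℓ, hk, hℓ, heq, -⟩ | ⟨rfl, k, ℓ, hk, hℓ, heq, -⟩) <;>
      exact ⟨k, ℓ, hk, hℓ, by linear_combination heq⟩

/-- Main Proposition: arithmetic characterization of the exceptional numbers. -/
theorem stmt_13 (a b c : ℤ) (ha : 1 ≤ a) (hb0 : 0 ≤ b) (hb5 : b ≤ 5)
    (hc0 : 0 ≤ c) (hca : c < a) (hbc : ¬ (b = 0 ∧ c = 0)) :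
    (∃ k ℓ : ℕ, 1 ≤ k ∧ 1 ≤ ℓ ∧
        (9 : ℤ) ^ ℓ * (3 * k - 1) = 12 * (a - c) + (b - 2) ^ 2 - 9) ↔
    ((b = 2 ∧ ∃ k ℓ : ℕ, 1 ≤ k ∧ 1 ≤ ℓ ∧
        (9 : ℤ) ^ ℓ * (3 * k - 1) = 12 * (a - c) - 9 ∧
        a - c ≡ -6 * ∑ i ∈ Finset.range (ℓ - 1), (9 : ℤ) ^ i [ZMOD 9 ^ ℓ]) ∨
     (b = 5 ∧ ∃ k ℓ : ℕ, 1 ≤ k ∧ 1 ≤ ℓ ∧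
        (9 : ℤ) ^ ℓ * (3 * k - 1) = 12 * (a - c) ∧
        a - c ≡ 6 * 9 ^ (ℓ - 1) [ZMOD 9 ^ ℓ])) :=
  stmt_13_general a b c hb0 hb5
end
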